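/- arXiv:2103.04029 — 3 statements merged into one kernel-verified Lean document; each statement's English description precedes it below -/
import Mathlib

section
/- Let (X, ξ) and (Y, η) be pointed coarse spaces and let f, g : X → Y be close coarse maps with f(ξ) = g(ξ) = η. Then for every coarse sequence s in (X, ξ), f ∘ s ≡ε g ∘ s; hence the induced maps εf and εg on ε-equivalence classes coincide (coarse invariance of ε). -/
/-- A coarse structure on a set `X`: a collection of "controlled" subsets of `X × X`
containing the diagonal, closed under subsets, finite unions, composition and inverse. -/
structure CoarseStructure (X : Type*) where
  controlled : Set (Set (X × X))
  diagonal_mem : {p : X × X | p.1 = p.2} ∈ controlled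
  mem_of_subset : ∀ E F : Set (X × X), E ∈ controlled → F ⊆ E → F ∈ controlled
  union_mem : ∀ E F : Set (X × X), E ∈ controlled → F ∈ controlled → E ∪ F ∈ controlled
  comp_mem : ∀ E F : Set (X × X), E ∈ controlled → F ∈ controlled →
    {p : X × X | ∃ z, (p.1, z) ∈ E ∧ (z, p.2) ∈ F} ∈ controlled
  inv_mem : ∀ E : Set (X × X), E ∈ controlled → {p : X × X | (p.2, p.1) ∈ E} ∈ controlled

/-- A subset `B` of a coarse space is bounded if `B × B` is controlled. -/
def CoarseStructure.IsBoundedSet {X : Type*} (C : CoarseStructure X) (B : Set X) : Prop :=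
  B ×ˢ B ∈ C.controlled

/-- A coarse sequence in a pointed coarse space `(X, ξ)`: a proper and bornologous
map `ℕ → X`. -/
def IsCoarseSeq {X : Type*} (C : CoarseStructure X) (ξ : X) (s : ℕ → X) : Prop :=
  (∀ B : Set X, C.IsBoundedSet B → ξ ∈ B → ∃ N : ℕ, ∀ i ≥ N, s i ∉ B) ∧
  (∃ E ∈ C.controlled, ∀ i : ℕ, (s i, s (i + 1)) ∈ E)

/-- `s` is a subsequence of `t`. -/
def IsSubseq {X : Type*} (s t : ℕ → X) : Prop :=
  ∃ k : ℕ → ℕ, StrictMono k ∧ ∀ i, s i = t (k i)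

/-- σ-equivalence: `s` and `t` are connected by a finite chain of coarse sequences
in which each consecutive pair is related by the subsequence relation. -/
def SigmaRel {X : Type*} (C : CoarseStructure X) (ξ : X) (s t : ℕ → X) : Prop :=
  ∃ (n : ℕ) (u : ℕ → ℕ → X), u 0 = s ∧ u n = t ∧ (∀ i ≤ n, IsCoarseSeq C ξ (u i)) ∧
    ∀ i < n, IsSubseq (u i) (u (i + 1)) ∨ IsSubseq (u (i + 1)) (u i)

/-- `x` and `y` are connected by an `E`-chain inside `A`. -/
def Chain {X : Type*} (E : Set (X × X)) (A : Set X) (x y : X) : Prop :=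
  ∃ (n : ℕ) (c : ℕ → X), c 0 = x ∧ c n = y ∧ (∀ i ≤ n, c i ∈ A) ∧
    ∀ i < n, (c i, c (i + 1)) ∈ E

/-- ε-equivalence: there is a controlled set `E` such that for every bounded set
`B ∋ ξ` there is `N` with the tails `{s i : i ≥ N}` and `{t i : i ≥ N}` lying in
the same `E`-connected component of `X \ B`. -/
def EpsRel {X : Type*} (C : CoarseStructure X) (ξ : X) (s t : ℕ → X) : Prop :=
  ∃ E ∈ C.controlled, ∀ B : Set X, C.IsBoundedSet B → ξ ∈ B → ∃ N : ℕ,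
    ∀ x ∈ (s '' {i | N ≤ i}) ∪ (t '' {i | N ≤ i}),
    ∀ y ∈ (s '' {i | N ≤ i}) ∪ (t '' {i | N ≤ i}),
      Chain E Bᶜ x y

/-- The set of coarse sequences in `(X, ξ)`. -/
def CoarseSeq {X : Type*} (C : CoarseStructure X) (ξ : X) :=
  {s : ℕ → X // IsCoarseSeq C ξ s}

/-- `σ(X, ξ)`: the quotient of the set of coarse sequences by σ-equivalence. -/
def SigmaQuot {X : Type*} (C : CoarseStructure X) (ξ : X) :=
  Quot (fun s t : CoarseSeq C ξ => SigmaRel C ξ s.1 t.1)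

/-- `ε(X, ξ)`: the quotient of the set of coarse sequences by ε-equivalence. -/
def EpsQuot {X : Type*} (C : CoarseStructure X) (ξ : X) :=
  Quot (fun s t : CoarseSeq C ξ => EpsRel C ξ s.1 t.1)

/-- A map between coarse spaces is proper if preimages of bounded sets are bounded. -/
def IsProperMapC {X Y : Type*} (CX : CoarseStructure X) (CY : CoarseStructure Y)
    (f : X → Y) : Prop :=
  ∀ B : Set Y, CY.IsBoundedSet B → CX.IsBoundedSet (f ⁻¹' B)

/-- A map between coarse spaces is bornologous if images of controlled sets are controlled. -/
def IsBornologous {X Y : Type*} (CX : CoarseStructure X) (CY : CoarseStructure Y)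
    (f : X → Y) : Prop :=
  ∀ E ∈ CX.controlled, (fun p : X × X => (f p.1, f p.2)) '' E ∈ CY.controlled

/-- A coarse map is a map that is both bornologous and proper. -/
def IsCoarseMap {X Y : Type*} (CX : CoarseStructure X) (CY : CoarseStructure Y)
    (f : X → Y) : Prop :=
  IsBornologous CX CY f ∧ IsProperMapC CX CY f

/-- Two maps are close if `{(f x, g x) : x ∈ X}` is controlled. -/
def IsClose {X Y : Type*} (CY : CoarseStructure Y) (f g : X → Y) : Prop :=
  Set.range (fun x : X => (f x, g x)) ∈ CY.controlled

lemma chain_trans' {X : Type*} {E : Set (X × X)} {A : Set X} {x y z : X}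
    (h1 : Chain E A x y) (h2 : Chain E A y z) : Chain E A x z := by
  obtain ⟨n, c, hc0, hcn, hcA, hcE⟩ := h1
  obtain ⟨m, d, hd0, hdm, hdA, hdE⟩ := h2
  refine ⟨n + m, fun i => if i ≤ n then c i else d (i - n), ?_, ?_, ?_, ?_⟩
  · simp [hc0]
  · rcases Nat.eq_zero_or_pos m with hm | hm
    · simp [hm, hcn, ← hd0, ← hdm, hm]
    · have : ¬ (n + m ≤ n) := by omega
      simp only [this, if_false]
      rw [Nat.add_sub_cancel_left, hdm]
  · intro i hi
    by_cases h : i ≤ n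
    · simp only [h, if_true]; exact hcA i h
    · simp only [h, if_false]; exact hdA (i - n) (by omega)
  · intro i hi
    show (if i ≤ n then c i else d (i - n), if i + 1 ≤ n then c (i + 1) else d (i + 1 - n)) ∈ E
    split_ifs with h1 h2 h3
    · exact hcE i (by omega)
    · have hin : i = n := by omega
      subst hin
      rw [show i + 1 - i = 1 by omega, hcn, ← hd0]
      exact hdE 0 (by omega)
    · exact absurd (show i ≤ n by omega) h1
    · rw [show i + 1 - n = (i - n) + 1 by omega]
      exact hdE (i - n) (by omega)

lemma chain_symm' {X : Type*} {E : Set (X × X)} {A : Set X} {x y : X}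
    (hE : ∀ a b : X, (a, b) ∈ E → (b, a) ∈ E)
    (h : Chain E A x y) : Chain E A y x := by
  obtain ⟨n, c, hc0, hcn, hcA, hcE⟩ := h
  refine ⟨n, fun i => c (n - i), by simp [hcn], by simp [hc0], ?_, ?_⟩
  · intro i _; exact hcA (n - i) (by omega)
  · intro i hi
    show (c (n - i), c (n - (i + 1))) ∈ E
    rw [show n - i = (n - (i + 1)) + 1 by omega]
    exact hE _ _ (hcE (n - (i + 1)) (by omega))

/-- if `f, g : (X,ξ) → (Y,η)` are close basepoint-preserving coarse maps,
then `f ∘ s ≡ε g ∘ s` for every coarse sequence `s`; hence the induced maps on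
ε-equivalence classes coincide (coarse invariance of ε). -/
theorem eps_coarse_invariance {X Y : Type*} (CX : CoarseStructure X)
    (CY : CoarseStructure Y) (ξ : X) (η : Y) (f g : X → Y)
    (hf : IsCoarseMap CX CY f) (hg : IsCoarseMap CX CY g) (hfg : IsClose CY f g)
    (hfξ : f ξ = η) (hgξ : g ξ = η) :
    (∀ s : ℕ → X, IsCoarseSeq CX ξ s → EpsRel CY η (f ∘ s) (g ∘ s)) ∧
    ∀ (s : CoarseSeq CX ξ) (h₁ : IsCoarseSeq CY η (f ∘ s.1))
      (h₂ : IsCoarseSeq CY η (g ∘ s.1)),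
      (Quot.mk (fun a b : CoarseSeq CY η => EpsRel CY η a.1 b.1) ⟨f ∘ s.1, h₁⟩ :
        EpsQuot CY η) = Quot.mk _ ⟨g ∘ s.1, h₂⟩ := by
  have main : ∀ s : ℕ → X, IsCoarseSeq CX ξ s → EpsRel CY η (f ∘ s) (g ∘ s) := by
    intro s hs
    obtain ⟨hsProper, Es, hEs, hEsStep⟩ := hs
    set F : Set (Y × Y) :=
      ((fun p : X × X => (f p.1, f p.2)) '' Es) ∪ Set.range (fun x => (f x, g x)) with hFdef
    have hFc : F ∈ CY.controlled := CY.union_mem _ _ (hf.1 Es hEs) hfg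
    set E : Set (Y × Y) := F ∪ {p | (p.2, p.1) ∈ F} with hEdef
    have hEc : E ∈ CY.controlled := CY.union_mem _ _ hFc (CY.inv_mem _ hFc)
    have hEsymm : ∀ a b : Y, (a, b) ∈ E → (b, a) ∈ E := by
      rintro a b (h | h)
      · exact Or.inr h
      · exact Or.inl h
    refine ⟨E, hEc, ?_⟩
    intro B hB hηB
    have h1 : CX.IsBoundedSet (f ⁻¹' B) := hf.2 B hB
    have h2 : CX.IsBoundedSet (g ⁻¹' B) := hg.2 B hB
    have hξ1 : ξ ∈ f ⁻¹' B := by simp only [Set.mem_preimage, hfξ]; exact hηB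
    have hξ2 : ξ ∈ g ⁻¹' B := by simp only [Set.mem_preimage, hgξ]; exact hηB
    have hUb : CX.IsBoundedSet (f ⁻¹' B ∪ g ⁻¹' B) := by
      apply CX.mem_of_subset
        (((f ⁻¹' B) ×ˢ (f ⁻¹' B) ∪ (g ⁻¹' B) ×ˢ (g ⁻¹' B)) ∪
          ({p : X × X | ∃ z, (p.1, z) ∈ (f ⁻¹' B) ×ˢ (f ⁻¹' B) ∧ (z, p.2) ∈ (g ⁻¹' B) ×ˢ (g ⁻¹' B)} ∪
           {p : X × X | ∃ z, (p.1, z) ∈ (g ⁻¹' B) ×ˢ (g ⁻¹' B) ∧ (z, p.2) ∈ (f ⁻¹' B) ×ˢ (f ⁻¹' B)}))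
      · exact CX.union_mem _ _ (CX.union_mem _ _ h1 h2)
          (CX.union_mem _ _ (CX.comp_mem _ _ h1 h2) (CX.comp_mem _ _ h2 h1))
      · rintro ⟨a, b⟩ ⟨(ha | ha), (hb | hb)⟩
        · exact Or.inl (Or.inl ⟨ha, hb⟩)
        · exact Or.inr (Or.inl ⟨ξ, ⟨ha, hξ1⟩, ⟨hξ2, hb⟩⟩)
        · exact Or.inr (Or.inr ⟨ξ, ⟨ha, hξ2⟩, ⟨hξ1, hb⟩⟩)
        · exact Or.inl (Or.inr ⟨ha, hb⟩)
    obtain ⟨N, hN⟩ := hsProper _ hUb (Or.inl hξ1)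
    have hfB : ∀ i ≥ N, f (s i) ∉ B := fun i hi hmem => hN i hi (Or.inl hmem)
    have hgB : ∀ i ≥ N, g (s i) ∉ B := fun i hi hmem => hN i hi (Or.inr hmem)
    refine ⟨N, ?_⟩
    -- chain along f from index N to i
    have base : ∀ i ≥ N, Chain E Bᶜ (f (s N)) (f (s i)) := by
      intro i hi
      refine ⟨i - N, fun k => f (s (N + k)), rfl, by show f (s (N + (i - N))) = f (s i); congr 2; omega, ?_, ?_⟩
      · intro k _; exact hfB (N + k) (by omega)
      · intro k _
        exact Or.inl (Or.inl ⟨(s (N + k), s (N + k + 1)), hEsStep (N + k), rfl⟩)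
    have hop : ∀ i ≥ N, Chain E Bᶜ (f (s i)) (g (s i)) := by
      intro i hi
      refine ⟨1, fun k => if k = 0 then f (s i) else g (s i), by simp, by simp, ?_, ?_⟩
      · intro k _
        by_cases h : k = 0
        · simp only [h, if_true]; exact hfB i hi
        · simp only [h, if_false]; exact hgB i hi
      · intro k hk
        interval_cases k
        simp only [if_true, if_false, one_ne_zero]
        exact Or.inl (Or.inr ⟨s i, rfl⟩)
    have toBase : ∀ p ∈ ((f ∘ s) '' {i | N ≤ i}) ∪ ((g ∘ s) '' {i | N ≤ i}),
        Chain E Bᶜ (f (s N)) p := by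
      rintro p (⟨i, hi, rfl⟩ | ⟨i, hi, rfl⟩)
      · exact base i hi
      · exact chain_trans' (base i hi) (hop i hi)
    intro x hx y hy
    exact chain_trans' (chain_symm' hEsymm (toBase x hx)) (toBase y hy)
  refine ⟨main, fun s h₁ h₂ => Quot.sound (main s.1 s.2)⟩
end

section
/- Let (X, ξ) be a pointed metric space that is proper (closed bounded sets are compact) and geodesic. Then there is a bijection between Ends(X), the set of ends of X, and ε(X,ξ), the set of ε-equivalence classes (sequential ends) of coarse sequences in (X, ξ). -/
open Filter

/-- A coarse sequence in a pointed metric space `(X, ξ)`: a sequence with uniformly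
bounded consecutive steps that diverges from `ξ` to infinity. -/
def IsCoarseSeqM {X : Type*} [PseudoMetricSpace X] (ξ : X) (s : ℕ → X) : Prop :=
  (∃ K : ℝ, ∀ i : ℕ, dist (s i) (s (i + 1)) ≤ K) ∧
  Tendsto (fun i => dist ξ (s i)) atTop atTop

/-- σ-equivalence of coarse sequences: `s` and `t` are connected by a finite chain of
coarse sequences in which each consecutive pair is related by the subsequence relation. -/
def SigmaRelM {X : Type*} [PseudoMetricSpace X] (ξ : X) (s t : ℕ → X) : Prop :=
  ∃ (n : ℕ) (u : ℕ → ℕ → X), u 0 = s ∧ u n = t ∧ (∀ i ≤ n, IsCoarseSeqM ξ (u i)) ∧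
    ∀ i < n, IsSubseq (u i) (u (i + 1)) ∨ IsSubseq (u (i + 1)) (u i)

/-- `x` and `y` are connected inside `A` by a finite chain with steps of length `≤ K`. -/
def ChainM {X : Type*} [PseudoMetricSpace X] (K : ℝ) (A : Set X) (x y : X) : Prop :=
  ∃ (n : ℕ) (c : ℕ → X), c 0 = x ∧ c n = y ∧ (∀ i ≤ n, c i ∈ A) ∧
    ∀ i < n, dist (c i) (c (i + 1)) ≤ K

/-- ε-equivalence: there is `K > 0` such that for every `r > 0` there is `N` with the
tails `{s i : i ≥ N}` and `{t i : i ≥ N}` lying in the same `K`-connected component of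
`X \ {x : dist ξ x ≤ r}`. -/
def EpsRelM {X : Type*} [PseudoMetricSpace X] (ξ : X) (s t : ℕ → X) : Prop :=
  ∃ K > (0 : ℝ), ∀ r > (0 : ℝ), ∃ N : ℕ,
    ∀ x ∈ (s '' {i | N ≤ i}) ∪ (t '' {i | N ≤ i}),
    ∀ y ∈ (s '' {i | N ≤ i}) ∪ (t '' {i | N ≤ i}),
      ChainM K {z | r < dist ξ z} x y

/-- The set of coarse sequences in the pointed metric space `(X, ξ)`. -/
def CoarseSeqM {X : Type*} [PseudoMetricSpace X] (ξ : X) :=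
  {s : ℕ → X // IsCoarseSeqM ξ s}

/-- `σ(X, ξ)`: the quotient of the set of coarse sequences by σ-equivalence. -/
def SigmaQuotM {X : Type*} [PseudoMetricSpace X] (ξ : X) :=
  Quot (fun s t : CoarseSeqM ξ => SigmaRelM ξ s.1 t.1)

/-- `ε(X, ξ)`: the quotient of the set of coarse sequences by ε-equivalence. -/
def EpsQuotM {X : Type*} [PseudoMetricSpace X] (ξ : X) :=
  Quot (fun s t : CoarseSeqM ξ => EpsRelM ξ s.1 t.1)

open NNReal Topology

/-- A ray in a topological space: a proper continuous map `[0,∞) → X`. -/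
def IsRay {X : Type*} [TopologicalSpace X] (r : ℝ≥0 → X) : Prop :=
  Continuous r ∧ ∀ K : Set X, IsCompact K → IsCompact (r ⁻¹' K)

/-- Two rays converge to the same end if for every compact `K ⊆ X` there is `N`
such that `r₀([N,∞))` and `r₁([N,∞))` lie in the same path-connected component
of `X \ K`. -/
def SameEnd {X : Type*} [TopologicalSpace X] (r₀ r₁ : ℝ≥0 → X) : Prop :=
  ∀ K : Set X, IsCompact K → ∃ N : ℕ,
    ∀ x ∈ (r₀ '' {t : ℝ≥0 | (N : ℝ≥0) ≤ t}) ∪ (r₁ '' {t : ℝ≥0 | (N : ℝ≥0) ≤ t}),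
    ∀ y ∈ (r₀ '' {t : ℝ≥0 | (N : ℝ≥0) ≤ t}) ∪ (r₁ '' {t : ℝ≥0 | (N : ℝ≥0) ≤ t}),
      JoinedIn Kᶜ x y

/-- `Ends X`: the set of ends of `X`, i.e. rays modulo converging to the same end. -/
def Ends (X : Type*) [TopologicalSpace X] :=
  Quot (fun r₀ r₁ : {r : ℝ≥0 → X // IsRay r} => SameEnd r₀.1 r₁.1)

/-- A metric space is geodesic if any two points are joined by an isometric
embedding of the interval `[0, dist x y]`. -/
def IsGeodesicSpace (X : Type*) [MetricSpace X] : Prop :=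
  ∀ x y : X, ∃ γ : ℝ → X, γ 0 = x ∧ γ (dist x y) = y ∧
    ∀ u ∈ Set.Icc 0 (dist x y), ∀ v ∈ Set.Icc 0 (dist x y),
      dist (γ u) (γ v) = |u - v|


/-!
A coarse sequence with steps at most `K` becomes a ray by joining consecutive terms by geodesic
segments: each segment stays within `K` of the sequence, so the resulting path is proper and its
tails stay as far from `ξ` as the tails of the sequence. Conversely a ray becomes a coarse
sequence by sampling it at times tending to infinity, with step sizes given by uniform continuity
on compact intervals. In a proper space, "outside a compact set" and "far from `ξ`" can be
exchanged; a path far from `ξ` contains `1`-chains between its points (its image is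
preconnected), and geodesics turn a `K`-chain far from `ξ` into a path that is only `K` closer.
So both constructions respect the equivalences, and they are mutually inverse on classes.
-/

open Metric Set

namespace ChainM

variable {X : Type*} [PseudoMetricSpace X] {K : ℝ} {A : Set X} {x y z : X}

lemma refl (hx : x ∈ A) : ChainM K A x x :=
  ⟨0, fun _ => x, rfl, rfl, fun _ _ => hx, fun _ h => absurd h (Nat.not_lt_zero _)⟩

lemma snoc (h : ChainM K A x y) (hz : z ∈ A) (hyz : dist y z ≤ K) : ChainM K A x z := by
  obtain ⟨n, c, rfl, rfl, hA, hc⟩ := h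
  refine ⟨n + 1, fun i => if i ≤ n then c i else z, by simp, by simp, fun i _ => ?_,
    fun i hi => ?_⟩
  · dsimp only
    split_ifs with h
    exacts [hA i h, hz]
  · rcases Nat.lt_succ_iff_lt_or_eq.1 hi with hi | rfl
    · simpa [hi.le, Nat.succ_le_of_lt hi] using hc i hi
    · simpa using hyz

lemma of_reflTransGen (hx : x ∈ A)
    (h : Relation.ReflTransGen (fun a b => b ∈ A ∧ dist a b ≤ K) x y) : ChainM K A x y := by
  induction h with
  | refl => exact refl hx
  | tail _ hbc ih => exact ih.snoc hbc.1 hbc.2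

end ChainM

lemma IsPreconnected.chainM {X : Type*} [PseudoMetricSpace X] {K : ℝ} {s A : Set X} {x y : X}
    (hs : IsPreconnected s) (hsA : s ⊆ A) (hK : 0 < K) (hx : x ∈ s) (hy : y ∈ s) :
    ChainM K A x y := by
  refine ChainM.of_reflTransGen (hsA hx) (hs.induction₂' _ (fun a ha => ?_)
    (fun _ _ _ _ _ _ => Relation.ReflTransGen.trans) hx hy)
  filter_upwards [self_mem_nhdsWithin, mem_nhdsWithin_of_mem_nhds (ball_mem_nhds a hK)]
    with b hb hab
  exact ⟨.single ⟨hsA hb, (mem_ball'.1 hab).le⟩, .single ⟨hsA ha, (mem_ball.1 hab).le⟩⟩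

lemma JoinedIn.chainM {X : Type*} [PseudoMetricSpace X] {K : ℝ} {A : Set X} {x y : X}
    (h : JoinedIn A x y) (hK : 0 < K) : ChainM K A x y :=
  (isPreconnected_range h.somePath.continuous).chainM (range_subset_iff.2 h.somePath_mem) hK
    ⟨0, h.somePath.source⟩ ⟨1, h.somePath.target⟩

section Sampling

variable {X : Type*} [PseudoMetricSpace X]

lemma Continuous.exists_antitone_modulus {r : ℝ≥0 → X} (hr : Continuous r) {ε : ℝ}
    (hε : 0 < ε) :
    ∃ δ : ℕ → ℝ≥0, Antitone δ ∧ (∀ n, 0 < δ n ∧ δ n ≤ 1) ∧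
      ∀ n : ℕ, ∀ u v : ℝ≥0, u ≤ n + 2 → v ≤ n + 2 → dist u v ≤ δ n → dist (r u) (r v) ≤ ε := by
  have hmod : ∀ n : ℕ, ∃ δ > (0 : ℝ), ∀ u ∈ Icc (0 : ℝ≥0) (n + 2), ∀ v ∈ Icc (0 : ℝ≥0) (n + 2),
      dist u v ≤ δ → dist (r u) (r v) ≤ ε := fun n =>
    uniformContinuousOn_iff_le.1
      (isCompact_Icc.uniformContinuousOn_of_continuous hr.continuousOn) ε hε
  choose δ₀ hδ₀ hmod using hmod
  let δ : ℕ → ℝ≥0 := fun n => (Finset.range (n + 1)).inf' Finset.nonempty_range_add_one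
    fun k => min (δ₀ k).toNNReal 1
  have hδ_le : ∀ n, δ n ≤ min (δ₀ n).toNNReal 1 := fun n =>
    Finset.inf'_le _ (Finset.self_mem_range_succ n)
  refine ⟨δ, fun m n hmn => Finset.inf'_mono _ (Finset.range_subset_range.2 (by omega)) _,
    fun n => ⟨(Finset.lt_inf'_iff _).2 fun k _ => by simp [hδ₀ k],
      (hδ_le n).trans (min_le_right _ _)⟩,
    fun n u v hu hv huv => hmod n u ⟨zero_le, hu⟩ v ⟨zero_le, hv⟩ ?_⟩
  calc dist u v ≤ δ n := huv
    _ ≤ (δ₀ n).toNNReal := NNReal.coe_le_coe.2 ((hδ_le n).trans (min_le_left _ _))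
    _ = δ₀ n := Real.coe_toNNReal _ (hδ₀ n).le

lemma Continuous.exists_seq_tendsto_dist_le {r : ℝ≥0 → X} (hr : Continuous r) {ε : ℝ}
    (hε : 0 < ε) :
    ∃ τ : ℕ → ℝ≥0, Tendsto τ atTop atTop ∧ ∀ i, dist (r (τ i)) (r (τ (i + 1))) ≤ ε := by
  obtain ⟨δ, hδ_anti, hδ, hmod⟩ := hr.exists_antitone_modulus hε
  let τ : ℕ → ℝ≥0 := fun i => Nat.rec 0 (fun _ t => t + δ ⌊t⌋₊) i
  have hτ_succ : ∀ i, τ (i + 1) = τ i + δ ⌊τ i⌋₊ := fun _ => rfl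
  refine ⟨τ, tendsto_atTop_atTop_of_monotone (monotone_nat_of_le_succ fun i => ?_) fun M => ?_,
    fun i => hmod ⌊τ i⌋₊ _ _ ?_ ?_ ?_⟩
  · rw [hτ_succ]; exact le_self_add
  · by_contra! hM
    have hlin : ∀ i, i • δ ⌊M⌋₊ ≤ τ i := by
      intro i
      induction i with
      | zero => simp
      | succ i ih =>
        rw [succ_nsmul, hτ_succ]
        exact add_le_add ih (hδ_anti (Nat.floor_le_floor (hM i).le))
    obtain ⟨i, hi⟩ := exists_lt_nsmul (hδ ⌊M⌋₊).1 M
    exact (hi.trans_le (hlin i)).not_ge (hM i).le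
  · exact (Nat.lt_floor_add_one _).le.trans (by gcongr; norm_num)
  · calc τ (i + 1) = τ i + δ ⌊τ i⌋₊ := hτ_succ i
      _ ≤ ⌊τ i⌋₊ + 1 + 1 := add_le_add (Nat.lt_floor_add_one _).le (hδ _).2
      _ = ⌊τ i⌋₊ + 2 := by rw [add_assoc, one_add_one_eq_two]
  · rw [hτ_succ, NNReal.dist_eq, NNReal.coe_add]
    simp

end Sampling

section Paths

variable {Y : Type*} [TopologicalSpace Y]

lemma Continuous.joinedIn_tail {f : ℝ≥0 → Y} (hf : Continuous f) {A : Set Y} {T θ : ℝ≥0}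
    (hA : ∀ t, T ≤ t → f t ∈ A) (hθ : T ≤ θ) : JoinedIn A (f T) (f θ) := by
  let g : ℝ → Y := f ∘ Real.toNNReal
  have hg : JoinedIn (g '' Icc T θ) (g T) (g θ) :=
    ((convex_Icc (T : ℝ) θ).isPathConnected (nonempty_Icc.2 hθ)).image'
      (hf.comp continuous_real_toNNReal).continuousOn |>.joinedIn _ (mem_image_of_mem g
        (left_mem_Icc.2 hθ)) _ (mem_image_of_mem g (right_mem_Icc.2 hθ))
  simp only [g, Function.comp_apply, Real.toNNReal_coe] at hg
  refine hg.mono (image_subset_iff.2 fun t ht => hA _ ?_)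
  simpa using Real.toNNReal_le_toNNReal ht.1

noncomputable def concatPaths {x : ℕ → Y} (γ : ∀ n, Path (x n) (x (n + 1))) : ℝ≥0 → Y :=
  fun t => (γ ⌊t⌋₊).extend (t - ⌊t⌋₊)

variable {x : ℕ → Y} (γ : ∀ n, Path (x n) (x (n + 1)))

lemma concatPaths_natCast (n : ℕ) : concatPaths γ n = x n := by
  simp [concatPaths]

lemma concatPaths_mem_range (t : ℝ≥0) : concatPaths γ t ∈ range (γ ⌊t⌋₊) := by
  rw [← Path.extend_range]
  exact mem_range_self _

lemma concatPaths_eqOn (n : ℕ) :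
    EqOn (concatPaths γ) (fun t : ℝ≥0 => (γ n).extend (t - n)) (Icc n (n + 1)) := by
  intro t ⟨hnt, htn⟩
  rcases htn.lt_or_eq with htn | rfl
  · unfold concatPaths
    rw [Nat.floor_eq_on_Ico n t ⟨hnt, htn⟩]
  · simpa using concatPaths_natCast γ (n + 1)

lemma continuous_concatPaths : Continuous (concatPaths γ) := by
  have hfin : LocallyFinite fun n : ℕ => Icc (n : ℝ≥0) (n + 1) := fun t =>
    ⟨Iio (t + 1), Iio_mem_nhds (lt_add_one t), (finite_Iio ⌈t + 1⌉₊).subset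
      fun n ⟨_, hu, hut⟩ => Nat.lt_ceil.2 (hu.1.trans_lt hut)⟩
  refine hfin.continuous (eq_univ_of_forall fun t => mem_iUnion.2
    ⟨⌊t⌋₊, Nat.floor_le t.2, (Nat.lt_floor_add_one t).le⟩) (fun _ => isClosed_Icc)
    fun n => ?_
  refine ContinuousOn.congr ?_ (concatPaths_eqOn γ n)
  exact ((γ n).continuous_extend.comp (NNReal.continuous_coe.sub continuous_const)).continuousOn

end Paths

section Geodesic

variable {X : Type*} [MetricSpace X]

lemma IsGeodesicSpace.joinedIn_closedBall (hgeo : IsGeodesicSpace X) (x y : X) :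
    JoinedIn (closedBall x (dist x y)) x y := by
  obtain ⟨γ, hγ0, hγ1, hγ⟩ := hgeo x y
  have hcont : ContinuousOn γ (Icc 0 (dist x y)) :=
    (LipschitzOnWith.of_dist_le_mul (K := 1) fun u hu v hv => by
      simp [hγ u hu v hv, Real.dist_eq]).continuousOn
  have hj := ((convex_Icc 0 (dist x y)).isPathConnected (nonempty_Icc.2 dist_nonneg)).image' hcont
    |>.joinedIn _ ⟨0, left_mem_Icc.2 dist_nonneg, hγ0⟩ _ ⟨_, right_mem_Icc.2 dist_nonneg, hγ1⟩
  refine hj.mono (image_subset_iff.2 fun u hu => ?_)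
  have hdist := hγ 0 (left_mem_Icc.2 dist_nonneg) u hu
  rw [hγ0] at hdist
  rw [mem_preimage, mem_closedBall, dist_comm, hdist]
  simpa [abs_of_nonneg hu.1] using hu.2

lemma ChainM.joinedIn_biUnion_closedBall (hgeo : IsGeodesicSpace X) {K : ℝ} (hK : 0 ≤ K)
    {A : Set X} {x y : X} (h : ChainM K A x y) : JoinedIn (⋃ a ∈ A, closedBall a K) x y := by
  obtain ⟨n, c, rfl, rfl, hA, hc⟩ := h
  suffices ∀ m ≤ n, JoinedIn (⋃ a ∈ A, closedBall a K) (c 0) (c m) from this n le_rfl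
  intro m hm
  induction m with
  | zero => exact JoinedIn.refl (mem_biUnion (hA 0 hm) (mem_closedBall_self hK))
  | succ m ih =>
    refine (ih (by omega)).trans ((hgeo.joinedIn_closedBall _ _).mono ?_)
    exact (closedBall_subset_closedBall (hc m hm)).trans
      (subset_biUnion_of_mem (u := fun a => closedBall a K) (hA m (by omega)))

noncomputable def IsGeodesicSpace.interpolate (hgeo : IsGeodesicSpace X) (s : ℕ → X) : ℝ≥0 → X :=
  concatPaths (x := s) fun n => (hgeo.joinedIn_closedBall (s n) (s (n + 1))).somePath

variable (hgeo : IsGeodesicSpace X) {s : ℕ → X}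

lemma IsGeodesicSpace.interpolate_natCast (n : ℕ) : hgeo.interpolate s n = s n :=
  concatPaths_natCast _ n

lemma IsGeodesicSpace.interpolate_comp_natCast :
    hgeo.interpolate s ∘ Nat.cast = s :=
  funext hgeo.interpolate_natCast

lemma IsGeodesicSpace.continuous_interpolate : Continuous (hgeo.interpolate s) :=
  continuous_concatPaths _

lemma IsGeodesicSpace.dist_interpolate_le {K : ℝ} (hK : ∀ i, dist (s i) (s (i + 1)) ≤ K)
    (t : ℝ≥0) : dist (s ⌊t⌋₊) (hgeo.interpolate s t) ≤ K := by
  obtain ⟨u, hu⟩ := concatPaths_mem_range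
    (fun n => (hgeo.joinedIn_closedBall (s n) (s (n + 1))).somePath) t
  rw [IsGeodesicSpace.interpolate, ← hu, dist_comm]
  exact (mem_closedBall.1 (JoinedIn.somePath_mem _ u)).trans (hK _)

lemma IsGeodesicSpace.dist_sub_le_dist_interpolate {K : ℝ}
    (hK : ∀ i, dist (s i) (s (i + 1)) ≤ K) (ξ : X) (t : ℝ≥0) :
    dist ξ (s ⌊t⌋₊) - K ≤ dist ξ (hgeo.interpolate s t) := by
  linarith [dist_triangle ξ (hgeo.interpolate s t) (s ⌊t⌋₊),
    dist_comm (s ⌊t⌋₊) (hgeo.interpolate s t), hgeo.dist_interpolate_le hK t]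

end Geodesic

section Ends

lemma sameEnd_of_forall_compact_anchor {Y : Type*} [TopologicalSpace Y] {r₀ r₁ : ℝ≥0 → Y}
    (h : ∀ C : Set Y, IsCompact C → ∃ (N : ℕ) (p : Y), ∀ θ : ℝ≥0, (N : ℝ≥0) ≤ θ →
      JoinedIn Cᶜ (r₀ θ) p ∧ JoinedIn Cᶜ (r₁ θ) p) :
    SameEnd r₀ r₁ := by
  intro C hC
  obtain ⟨N, p, hN⟩ := h C hC
  have hp : ∀ x ∈ (r₀ '' {t : ℝ≥0 | (N : ℝ≥0) ≤ t}) ∪ (r₁ '' {t : ℝ≥0 | (N : ℝ≥0) ≤ t}),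
      JoinedIn Cᶜ x p := by
    rintro _ (⟨θ, hθ, rfl⟩ | ⟨θ, hθ, rfl⟩)
    exacts [(hN θ hθ).1, (hN θ hθ).2]
  exact ⟨N, fun x hx y hy => (hp x hx).trans (hp y hy).symm⟩

lemma IsRay.sameEnd_self {Y : Type*} [TopologicalSpace Y] {r : ℝ≥0 → Y} (hr : IsRay r) :
    SameEnd r r := by
  refine sameEnd_of_forall_compact_anchor fun C hC => ?_
  obtain ⟨c, hc⟩ := (hr.2 C hC).bddAbove
  have hfar : ∀ t : ℝ≥0, ((⌊c⌋₊ + 1 : ℕ) : ℝ≥0) ≤ t → r t ∈ Cᶜ := fun t ht hrt =>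
    (ht.trans (hc hrt)).not_gt (by simpa using Nat.lt_floor_add_one c)
  exact ⟨⌊c⌋₊ + 1, _, fun θ hθ =>
    ⟨(hr.1.joinedIn_tail hfar hθ).symm, (hr.1.joinedIn_tail hfar hθ).symm⟩⟩

variable {X : Type*} [MetricSpace X] {ξ : X}

lemma sameEnd_of_forall_dist_anchor {r₀ r₁ : ℝ≥0 → X}
    (h : ∀ ρ > 0, ∃ (N : ℕ) (p : X), ∀ θ : ℝ≥0, (N : ℝ≥0) ≤ θ →
      JoinedIn {z | ρ < dist ξ z} (r₀ θ) p ∧ JoinedIn {z | ρ < dist ξ z} (r₁ θ) p) :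
    SameEnd r₀ r₁ := by
  refine sameEnd_of_forall_compact_anchor fun C hC => ?_
  obtain ⟨ρ, hρ, hCρ⟩ := hC.isBounded.subset_closedBall_lt 0 ξ
  have hsub : {z | ρ < dist ξ z} ⊆ Cᶜ := fun z hz hzC =>
    (hz.trans_le (mem_closedBall'.1 (hCρ hzC))).false
  obtain ⟨N, p, hN⟩ := h ρ hρ
  exact ⟨N, p, fun θ hθ => ⟨(hN θ hθ).1.mono hsub, (hN θ hθ).2.mono hsub⟩⟩

lemma IsRay.tendsto_dist [ProperSpace X] {r : ℝ≥0 → X} (hr : IsRay r) (ξ : X) :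
    Tendsto (fun t => dist ξ (r t)) atTop atTop := by
  refine tendsto_atTop.2 fun M => ?_
  obtain ⟨c, hc⟩ := (hr.2 _ (isCompact_closedBall ξ M)).bddAbove
  filter_upwards [eventually_gt_atTop c] with t ht
  by_contra! hM
  exact ht.not_ge (hc (mem_closedBall'.2 hM.le))

lemma isRay_of_tendsto_dist {f : ℝ≥0 → X} (hf : Continuous f)
    (h : Tendsto (fun t => dist ξ (f t)) atTop atTop) : IsRay f := by
  refine ⟨hf, fun C hC => ?_⟩
  obtain ⟨M, hM⟩ := hC.isBounded.subset_closedBall ξ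
  obtain ⟨T, hT⟩ := (h.eventually_gt_atTop M).exists_forall_of_atTop
  refine (isCompact_Icc (b := T)).of_isClosed_subset (hC.isClosed.preimage hf)
    fun t ht => ⟨zero_le, ?_⟩
  by_contra! htT
  exact (hT t htT.le).not_ge (mem_closedBall'.1 (hM ht))

end Ends

section Correspondence

variable {X : Type*} [MetricSpace X] {ξ : X}

lemma IsGeodesicSpace.isRay_interpolate (hgeo : IsGeodesicSpace X) {s : ℕ → X}
    (hs : IsCoarseSeqM ξ s) : IsRay (hgeo.interpolate s) := by
  obtain ⟨⟨K, hK⟩, hsξ⟩ := hs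
  refine isRay_of_tendsto_dist (ξ := ξ) hgeo.continuous_interpolate ?_
  exact tendsto_atTop_mono (hgeo.dist_sub_le_dist_interpolate hK ξ)
    (tendsto_atTop_add_const_right _ _ (hsξ.comp tendsto_nat_floor_atTop))

lemma IsGeodesicSpace.joinedIn_interpolate_tail (hgeo : IsGeodesicSpace X) {s : ℕ → X}
    {K ρ : ℝ} (hK : ∀ i, dist (s i) (s (i + 1)) ≤ K) {N : ℕ}
    (hfar : ∀ i, N ≤ i → ρ + K < dist ξ (s i)) {θ : ℝ≥0} (hθ : (N : ℝ≥0) ≤ θ) :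
    JoinedIn {z | ρ < dist ξ z} (hgeo.interpolate s θ) (s N) := by
  rw [← hgeo.interpolate_natCast (s := s) N]
  refine (hgeo.continuous_interpolate.joinedIn_tail (fun t ht => ?_) hθ).symm
  show ρ < dist ξ _
  have := hfar _ (Nat.le_floor ht)
  linarith [hgeo.dist_sub_le_dist_interpolate hK ξ t]

lemma epsRelM_comp_of_sameEnd [ProperSpace X] {r₀ r₁ : ℝ≥0 → X} (h : SameEnd r₀ r₁)
    {τ σ : ℕ → ℝ≥0} (hτ : Tendsto τ atTop atTop) (hσ : Tendsto σ atTop atTop) :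
    EpsRelM ξ (r₀ ∘ τ) (r₁ ∘ σ) := by
  refine ⟨1, one_pos, fun ρ _ => ?_⟩
  obtain ⟨N, hN⟩ := h _ (isCompact_closedBall ξ ρ)
  obtain ⟨M, hM⟩ :=
    ((hτ.eventually_ge_atTop N).and (hσ.eventually_ge_atTop N)).exists_forall_of_atTop
  have htail : ∀ x ∈ ((r₀ ∘ τ) '' {i | M ≤ i}) ∪ ((r₁ ∘ σ) '' {i | M ≤ i}),
      x ∈ (r₀ '' {t : ℝ≥0 | (N : ℝ≥0) ≤ t}) ∪ (r₁ '' {t : ℝ≥0 | (N : ℝ≥0) ≤ t}) := by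
    rintro _ (⟨i, hi, rfl⟩ | ⟨i, hi, rfl⟩)
    exacts [Or.inl ⟨τ i, (hM i hi).1, rfl⟩, Or.inr ⟨σ i, (hM i hi).2, rfl⟩]
  refine ⟨M, fun x hx y hy => ?_⟩
  exact ((hN x (htail x hx) y (htail y hy)).mono fun z hz =>
    not_le.1 (mt mem_closedBall'.2 hz)).chainM one_pos

lemma IsGeodesicSpace.sameEnd_interpolate_comp (hgeo : IsGeodesicSpace X)
    {r : ℝ≥0 → X} (hr : Continuous r) (hrξ : Tendsto (fun t => dist ξ (r t)) atTop atTop)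
    {τ : ℕ → ℝ≥0} (hτ : Tendsto τ atTop atTop) {K : ℝ}
    (hK : ∀ i, dist (r (τ i)) (r (τ (i + 1))) ≤ K) :
    SameEnd r (hgeo.interpolate (r ∘ τ)) := by
  refine sameEnd_of_forall_dist_anchor (ξ := ξ) fun ρ _ => ?_
  have hK0 : 0 ≤ K := dist_nonneg.trans (hK 0)
  obtain ⟨T, hT⟩ := (hrξ.eventually_gt_atTop (ρ + K)).exists_forall_of_atTop
  obtain ⟨N, hN⟩ := (hτ.eventually_ge_atTop T).exists_forall_of_atTop
  have hfar : ∀ t, T ≤ t → r t ∈ {z | ρ < dist ξ z} := fun t ht => by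
    show ρ < dist ξ (r t)
    linarith [hT t ht]
  refine ⟨max N ⌈T⌉₊, r T, fun θ hθ => ⟨?_, ?_⟩⟩
  · exact (hr.joinedIn_tail hfar
      ((Nat.le_ceil T).trans ((Nat.cast_le.2 (le_max_right _ _)).trans hθ))).symm
  · exact (hgeo.joinedIn_interpolate_tail hK
      (fun i hi => hT _ (hN i ((le_max_left _ _).trans hi))) hθ).trans
      (hr.joinedIn_tail hfar (hN _ (le_max_left _ _))).symm

lemma IsGeodesicSpace.sameEnd_interpolate_of_epsRelM (hgeo : IsGeodesicSpace X)
    {s t : ℕ → X} (hs : IsCoarseSeqM ξ s) (ht : IsCoarseSeqM ξ t) (h : EpsRelM ξ s t) :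
    SameEnd (hgeo.interpolate s) (hgeo.interpolate t) := by
  obtain ⟨⟨Ks, hKs⟩, hsξ⟩ := hs
  obtain ⟨⟨Kt, hKt⟩, htξ⟩ := ht
  obtain ⟨K, hK, hchain⟩ := h
  refine sameEnd_of_forall_dist_anchor (ξ := ξ) fun ρ hρ => ?_
  obtain ⟨N₁, hN₁⟩ := hchain (ρ + K) (by positivity)
  obtain ⟨N₂, hN₂⟩ := ((hsξ.eventually_gt_atTop (ρ + Ks)).and
    (htξ.eventually_gt_atTop (ρ + Kt))).exists_forall_of_atTop
  have hthick : ⋃ a ∈ {z | ρ + K < dist ξ z}, closedBall a K ⊆ {z | ρ < dist ξ z} := by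
    intro z hz
    obtain ⟨a, ha : ρ + K < dist ξ a, hza⟩ := mem_iUnion₂.1 hz
    show ρ < dist ξ z
    linarith [dist_triangle ξ z a, mem_closedBall.1 hza]
  let N := max N₁ N₂
  have hts : JoinedIn {z | ρ < dist ξ z} (t N) (s N) :=
    ((hN₁ _ (Or.inr ⟨N, le_max_left N₁ N₂, rfl⟩) _ (Or.inl ⟨N, le_max_left N₁ N₂, rfl⟩)
      ).joinedIn_biUnion_closedBall hgeo hK.le).mono hthick
  refine ⟨N, s N, fun θ hθ => ⟨?_, ?_⟩⟩
  · exact hgeo.joinedIn_interpolate_tail hKs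
      (fun i hi => (hN₂ i ((le_max_right _ _).trans hi)).1) hθ
  · exact (hgeo.joinedIn_interpolate_tail hKt
      (fun i hi => (hN₂ i ((le_max_right _ _).trans hi)).2) hθ).trans hts

end Correspondence

/-- for a proper geodesic pointed metric space `(X, ξ)`, there is a
bijection between `Ends X` and the set `ε(X, ξ)` of sequential ends. -/
theorem ends_equiv_epsQuot {X : Type*} [MetricSpace X]
    (hproper : ∀ B : Set X, IsClosed B → Bornology.IsBounded B → IsCompact B)
    (hgeo : IsGeodesicSpace X) (ξ : X) :
    Nonempty (Ends X ≃ EpsQuotM ξ) := by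
  have : ProperSpace X := ⟨fun x r => hproper _ isClosed_closedBall isBounded_closedBall⟩
  choose τ hτ hτ_step using fun r : {r : ℝ≥0 → X // IsRay r} =>
    r.2.1.exists_seq_tendsto_dist_le one_pos
  let F : {r : ℝ≥0 → X // IsRay r} → CoarseSeqM ξ := fun r =>
    ⟨r.1 ∘ τ r, ⟨1, hτ_step r⟩, (r.2.tendsto_dist ξ).comp (hτ r)⟩
  let G : CoarseSeqM ξ → {r : ℝ≥0 → X // IsRay r} := fun s =>
    ⟨hgeo.interpolate s.1, hgeo.isRay_interpolate s.2⟩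
  refine ⟨⟨Quot.lift (fun r => Quot.mk _ (F r))
      (fun r₀ r₁ h => Quot.sound (epsRelM_comp_of_sameEnd h (hτ r₀) (hτ r₁))),
    Quot.lift (fun s => Quot.mk _ (G s))
      (fun s t h => Quot.sound (hgeo.sameEnd_interpolate_of_epsRelM s.2 t.2 h)),
    Quot.ind fun r => ?_, Quot.ind fun s => ?_⟩⟩
  · exact Eq.symm <| Quot.sound <|
      hgeo.sameEnd_interpolate_comp r.2.1 (r.2.tendsto_dist ξ) (hτ r) (hτ_step r)
  · have h := epsRelM_comp_of_sameEnd (ξ := ξ) (G s).2.sameEnd_self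
      tendsto_natCast_atTop_atTop (hτ (G s))
    rw [hgeo.interpolate_comp_natCast] at h
    exact Eq.symm <| Quot.sound h
end

section
/- Let T be a finitely branching rooted tree with root the empty sequence, equipped with the tree metric. Then σ(T, root), the set of σ-equivalence classes of coarse sequences in (T, root), is equipotent to [T], the set of infinite branches of T. -/
open Filter

/-- The length of the longest common prefix of two lists. -/
def commonPrefixLen : List ℕ → List ℕ → ℕ
  | a :: s, b :: t => if a = b then commonPrefixLen s t + 1 else 0
  | _, _ => 0

/-- The tree metric on finite sequences: `d(s,t) = |s| + |t| - 2ℓ` where `ℓ` is the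
length of the longest common prefix of `s` and `t`. -/
def treeDist (s t : List ℕ) : ℕ :=
  s.length + t.length - 2 * commonPrefixLen s t

/-- A rooted tree: a set of finite sequences containing the empty sequence and
closed under prefixes. -/
def IsTree (T : Set (List ℕ)) : Prop :=
  [] ∈ T ∧ ∀ l ∈ T, ∀ l' : List ℕ, l' <+: l → l' ∈ T

/-- A tree is finitely branching if every node has only finitely many one-step
extensions in the tree. -/
def FinitelyBranching (T : Set (List ℕ)) : Prop :=
  ∀ l ∈ T, {n : ℕ | l ++ [n] ∈ T}.Finite

/-- `[T]`: the set of infinite branches of `T`. -/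
def Branch (T : Set (List ℕ)) :=
  {f : ℕ → ℕ // ∀ n : ℕ, (List.ofFn fun i : Fin n => f i.1) ∈ T}

/-- A coarse sequence in the pointed metric space `(T, root)`: a sequence of nodes of
`T` with uniformly bounded consecutive steps that diverges from the root to infinity. -/
def IsCoarseSeqT (T : Set (List ℕ)) (s : ℕ → List ℕ) : Prop :=
  (∀ i : ℕ, s i ∈ T) ∧
  (∃ K : ℝ, ∀ i : ℕ, (treeDist (s i) (s (i + 1)) : ℝ) ≤ K) ∧
  Tendsto (fun i => treeDist [] (s i)) atTop atTop

/-- σ-equivalence of coarse sequences in `(T, root)`. -/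
def SigmaRelT (T : Set (List ℕ)) (s t : ℕ → List ℕ) : Prop :=
  ∃ (n : ℕ) (u : ℕ → ℕ → List ℕ), u 0 = s ∧ u n = t ∧ (∀ i ≤ n, IsCoarseSeqT T (u i)) ∧
    ∀ i < n, IsSubseq (u i) (u (i + 1)) ∨ IsSubseq (u (i + 1)) (u i)

/-- `x` and `y` are connected inside `A` by a finite chain with steps of tree
distance `≤ K`. -/
def ChainT (K : ℝ) (A : Set (List ℕ)) (x y : List ℕ) : Prop :=
  ∃ (n : ℕ) (c : ℕ → List ℕ), c 0 = x ∧ c n = y ∧ (∀ i ≤ n, c i ∈ A) ∧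
    ∀ i < n, (treeDist (c i) (c (i + 1)) : ℝ) ≤ K

/-- ε-equivalence of coarse sequences in `(T, root)`: there is `K > 0` such that for
every `r > 0` there is `N` with the tails of `s` and `t` lying in the same
`K`-connected component of `T \ {x : d(root, x) ≤ r}`. -/
def EpsRelT (T : Set (List ℕ)) (s t : ℕ → List ℕ) : Prop :=
  ∃ K > (0 : ℝ), ∀ r > (0 : ℝ), ∃ N : ℕ,
    ∀ x ∈ (s '' {i | N ≤ i}) ∪ (t '' {i | N ≤ i}),
    ∀ y ∈ (s '' {i | N ≤ i}) ∪ (t '' {i | N ≤ i}),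
      ChainT K {l : List ℕ | l ∈ T ∧ r < (treeDist [] l : ℝ)} x y

/-- The set of coarse sequences in `(T, root)`. -/
def CoarseSeqT (T : Set (List ℕ)) := {s : ℕ → List ℕ // IsCoarseSeqT T s}

/-- `σ(T, root)`: the quotient of the set of coarse sequences by σ-equivalence. -/
def SigmaQuotT (T : Set (List ℕ)) :=
  Quot (fun s t : CoarseSeqT T => SigmaRelT T s.1 t.1)

/-- `ε(T, root)`: the quotient of the set of coarse sequences by ε-equivalence. -/
def EpsQuotT (T : Set (List ℕ)) :=
  Quot (fun s t : CoarseSeqT T => EpsRelT T s.1 t.1)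

/-!
A coarse sequence in a tree converges to a branch: once it stays deep enough, steps of bounded
length cannot change its prefixes of a fixed length. Subsequences have the same limit, so the
limit branch is a σ-invariant. Conversely, a coarse sequence `s` converging to `f` is
σ-equivalent to the sequence of prefixes of `f`. Infinitely often `s` is within its step bound
`K` of `f`; along those times it stays at bounded distance from a sequence of prefixes of `f`
moving by at most `K`, two sequences at bounded distance are subsequences of their interleaving,
and a walk along `f` that moves by at most `K` shares a subsequence with the sequence of all
prefixes of `f`.
-/

theorem le_commonPrefixLen_iff {s t : List ℕ} {n : ℕ} :
    n ≤ commonPrefixLen s t ↔ n ≤ s.length ∧ s.take n = t.take n := by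
  induction s generalizing t n with
  | nil => cases t <;> cases n <;> simp [commonPrefixLen]
  | cons a s ih =>
    cases t with
    | nil => cases n <;> simp [commonPrefixLen]
    | cons b t =>
      cases n with
      | zero => simp
      | succ n =>
        by_cases hab : a = b
        · simp [commonPrefixLen, hab, ih]
        · simp [commonPrefixLen, hab]

theorem commonPrefixLen_le_length_left (s t : List ℕ) : commonPrefixLen s t ≤ s.length :=
  (le_commonPrefixLen_iff.1 le_rfl).1

theorem le_length_of_take_eq_take {α : Type*} {s t : List α} {n : ℕ} (h : s.take n = t.take n)
    (hn : n ≤ s.length) : n ≤ t.length := by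
  have := congrArg List.length h
  simp only [List.length_take] at this
  omega

theorem commonPrefixLen_comm (s t : List ℕ) : commonPrefixLen s t = commonPrefixLen t s :=
  eq_of_forall_le_iff fun n => by
    simp only [le_commonPrefixLen_iff]
    exact ⟨fun ⟨hn, h⟩ => ⟨le_length_of_take_eq_take h hn, h.symm⟩,
      fun ⟨hn, h⟩ => ⟨le_length_of_take_eq_take h hn, h.symm⟩⟩

theorem commonPrefixLen_le_length_right (s t : List ℕ) : commonPrefixLen s t ≤ t.length :=
  commonPrefixLen_comm s t ▸ commonPrefixLen_le_length_left t s

theorem commonPrefixLen_self (s : List ℕ) : commonPrefixLen s s = s.length :=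
  le_antisymm (commonPrefixLen_le_length_left s s) (le_commonPrefixLen_iff.2 ⟨le_rfl, rfl⟩)

theorem commonPrefixLen_nil_left (s : List ℕ) : commonPrefixLen [] s = 0 := by
  cases s <;> rfl

theorem min_commonPrefixLen_le (x y z : List ℕ) :
    min (commonPrefixLen x y) (commonPrefixLen y z) ≤ commonPrefixLen x z := by
  obtain ⟨hx, hxy⟩ := le_commonPrefixLen_iff.1 (min_le_left (commonPrefixLen x y) _)
  obtain ⟨-, hyz⟩ := le_commonPrefixLen_iff.1 (min_le_right _ (commonPrefixLen y z))
  exact le_commonPrefixLen_iff.2 ⟨hx, hxy.trans hyz⟩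

theorem treeDist_comm (x y : List ℕ) : treeDist x y = treeDist y x := by
  rw [treeDist, treeDist, commonPrefixLen_comm, Nat.add_comm x.length]

theorem treeDist_nil_left (x : List ℕ) : treeDist [] x = x.length := by
  simp [treeDist, commonPrefixLen_nil_left]

theorem length_le_commonPrefixLen_add_treeDist (x y : List ℕ) :
    x.length ≤ commonPrefixLen x y + treeDist x y := by
  have := commonPrefixLen_le_length_right x y
  rw [treeDist]
  omega

theorem treeDist_triangle (x y z : List ℕ) : treeDist x z ≤ treeDist x y + treeDist y z := by
  have := min_commonPrefixLen_le x y z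
  have := commonPrefixLen_le_length_left y z
  have := commonPrefixLen_le_length_right x y
  have := commonPrefixLen_le_length_left x z
  have := commonPrefixLen_le_length_right y z
  simp only [treeDist]
  omega

theorem length_le_length_add_treeDist (x y : List ℕ) : y.length ≤ x.length + treeDist x y := by
  simpa only [treeDist_nil_left] using treeDist_triangle [] x y

def branchPrefix (f : ℕ → ℕ) (n : ℕ) : List ℕ := List.ofFn fun i : Fin n => f i.1

@[simp] theorem length_branchPrefix (f : ℕ → ℕ) (n : ℕ) : (branchPrefix f n).length = n := by
  simp [branchPrefix]

theorem getElem?_branchPrefix (f : ℕ → ℕ) (n i : ℕ) :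
    (branchPrefix f n)[i]? = if i < n then some (f i) else none := by
  simp [branchPrefix, List.getElem?_ofFn]

theorem take_eq_branchPrefix_iff {x : List ℕ} {f : ℕ → ℕ} {n : ℕ} :
    x.take n = branchPrefix f n ↔ ∀ i < n, x[i]? = some (f i) := by
  rw [List.ext_getElem?_iff]
  refine forall_congr' fun i => ?_
  rw [List.getElem?_take, getElem?_branchPrefix]
  by_cases hi : i < n <;> simp [hi]

theorem take_branchPrefix (f : ℕ → ℕ) (m n : ℕ) :
    (branchPrefix f n).take m = branchPrefix f (min m n) := by
  apply List.ext_getElem?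
  intro i
  simp only [List.getElem?_take, getElem?_branchPrefix]
  by_cases hm : i < m <;> by_cases hn : i < n <;> simp [hm, hn]

theorem commonPrefixLen_branchPrefix (f : ℕ → ℕ) (a b : ℕ) :
    commonPrefixLen (branchPrefix f a) (branchPrefix f b) = min a b :=
  eq_of_forall_le_iff fun k => by
    rw [le_commonPrefixLen_iff, take_branchPrefix, take_branchPrefix, length_branchPrefix]
    constructor
    · rintro ⟨hka, h⟩
      have := congrArg List.length h
      simp only [length_branchPrefix] at this
      omega
    · intro hk
      exact ⟨hk.trans (min_le_left _ _), by rw [min_eq_left (hk.trans (min_le_left _ _)),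
        min_eq_left (hk.trans (min_le_right _ _))]⟩

theorem treeDist_branchPrefix (f : ℕ → ℕ) (a b : ℕ) :
    treeDist (branchPrefix f a) (branchPrefix f b) = a + b - 2 * min a b := by
  rw [treeDist, commonPrefixLen_branchPrefix, length_branchPrefix, length_branchPrefix]

/-- The depth at which `x` leaves the branch `f`. -/
def agreeLen (f : ℕ → ℕ) (x : List ℕ) : ℕ := commonPrefixLen x (branchPrefix f x.length)

theorem le_agreeLen_iff {f : ℕ → ℕ} {x : List ℕ} {n : ℕ} :
    n ≤ agreeLen f x ↔ n ≤ x.length ∧ x.take n = branchPrefix f n := by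
  rw [agreeLen, le_commonPrefixLen_iff, take_branchPrefix]
  exact and_congr_right fun hn => by rw [min_eq_left hn]

theorem le_agreeLen_of_take_eq {f : ℕ → ℕ} {x : List ℕ} {n : ℕ}
    (h : x.take n = branchPrefix f n) : n ≤ agreeLen f x :=
  le_agreeLen_iff.2 ⟨by simpa using congrArg List.length h, h⟩

theorem agreeLen_le_length (f : ℕ → ℕ) (x : List ℕ) : agreeLen f x ≤ x.length :=
  commonPrefixLen_le_length_left _ _

theorem treeDist_branchPrefix_agreeLen (f : ℕ → ℕ) (x : List ℕ) :
    treeDist x (branchPrefix f (agreeLen f x)) = x.length - agreeLen f x := by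
  have hc : commonPrefixLen x (branchPrefix f (agreeLen f x)) = agreeLen f x := by
    refine le_antisymm
      ((commonPrefixLen_le_length_right _ _).trans_eq (length_branchPrefix _ _)) ?_
    obtain ⟨hlen, htake⟩ := le_agreeLen_iff.1 (le_refl (agreeLen f x))
    exact le_commonPrefixLen_iff.2 ⟨hlen, by rw [htake, take_branchPrefix, min_self]⟩
  rw [treeDist, hc, length_branchPrefix]
  omega

theorem min_agreeLen_commonPrefixLen_le (f : ℕ → ℕ) (x y : List ℕ) :
    min (agreeLen f x) (commonPrefixLen x y) ≤ agreeLen f y := by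
  obtain ⟨-, hx⟩ := le_agreeLen_iff.1 (min_le_left (agreeLen f x) (commonPrefixLen x y))
  obtain ⟨-, hxy⟩ := le_commonPrefixLen_iff.1 (min_le_right (agreeLen f x) (commonPrefixLen x y))
  exact le_agreeLen_of_take_eq (hxy.symm.trans hx)

theorem agreeLen_le_agreeLen_add_treeDist (f : ℕ → ℕ) (x y : List ℕ) :
    agreeLen f x ≤ agreeLen f y + treeDist x y := by
  have := min_agreeLen_commonPrefixLen_le f x y
  have := length_le_commonPrefixLen_add_treeDist x y
  have := agreeLen_le_length f x
  omega

theorem agreeLen_eq_of_add_treeDist_lt {f : ℕ → ℕ} {x y : List ℕ}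
    (h : agreeLen f x + treeDist x y < x.length) : agreeLen f y = agreeLen f x := by
  have := min_agreeLen_commonPrefixLen_le f x y
  have := min_agreeLen_commonPrefixLen_le f y x
  have := length_le_commonPrefixLen_add_treeDist x y
  rw [commonPrefixLen_comm y x] at *
  omega

def TendstoBranch (s : ℕ → List ℕ) (f : ℕ → ℕ) : Prop :=
  ∀ i, ∀ᶠ j in atTop, (s j)[i]? = some (f i)

namespace TendstoBranch

variable {s : ℕ → List ℕ} {f : ℕ → ℕ}

theorem unique {g : ℕ → ℕ} (hf : TendstoBranch s f) (hg : TendstoBranch s g) : f = g :=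
  funext fun i => by
    obtain ⟨j, hfj, hgj⟩ := ((hf i).and (hg i)).exists
    exact Option.some_injective _ (hfj.symm.trans hgj)

theorem comp_strictMono (hf : TendstoBranch s f) {k : ℕ → ℕ} (hk : StrictMono k) :
    TendstoBranch (s ∘ k) f :=
  fun i => hk.tendsto_atTop.eventually (hf i)

theorem eventually_take_eq (hf : TendstoBranch s f) (n : ℕ) :
    ∀ᶠ j in atTop, (s j).take n = branchPrefix f n := by
  simp_rw [take_eq_branchPrefix_iff]
  exact (Set.finite_Iio n).eventually_all.2 fun i _ => hf i

theorem tendsto_agreeLen (hf : TendstoBranch s f) :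
    Tendsto (fun j => agreeLen f (s j)) atTop atTop :=
  tendsto_atTop.2 fun n => (hf.eventually_take_eq n).mono fun _ => le_agreeLen_of_take_eq

theorem branchPrefix_mem {T : Set (List ℕ)} (hT : IsTree T) (hs : ∀ j, s j ∈ T)
    (hf : TendstoBranch s f) (n : ℕ) : branchPrefix f n ∈ T := by
  obtain ⟨j, hj⟩ := (hf.eventually_take_eq n).exists
  exact hT.2 _ (hs j) _ (hj ▸ List.take_prefix n (s j))

end TendstoBranch

theorem tendstoBranch_branchPrefix (f : ℕ → ℕ) : TendstoBranch (branchPrefix f) f :=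
  fun i => (eventually_gt_atTop i).mono fun j hj => by rw [getElem?_branchPrefix, if_pos hj]

theorem isCoarseSeqT_iff {T : Set (List ℕ)} {s : ℕ → List ℕ} :
    IsCoarseSeqT T s ↔ (∀ i, s i ∈ T) ∧ (∃ K : ℕ, ∀ i, treeDist (s i) (s (i + 1)) ≤ K) ∧
      Tendsto (fun i => (s i).length) atTop atTop := by
  simp only [IsCoarseSeqT, treeDist_nil_left]
  refine and_congr_right fun _ => and_congr_left fun _ =>
    ⟨fun ⟨K, hK⟩ => ⟨⌈K⌉₊, fun i => ?_⟩, fun ⟨K, hK⟩ => ⟨K, fun i => by exact_mod_cast hK i⟩⟩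
  exact_mod_cast (hK i).trans (Nat.le_ceil K)

/-- Once `s` stays at depth `≥ n + K`, no step of length `≤ K` passes through a node of depth
`< n`. -/
theorem exists_le_commonPrefixLen_of_isCoarseSeqT {T : Set (List ℕ)} {s : ℕ → List ℕ}
    (hs : IsCoarseSeqT T s) (n : ℕ) : ∃ N, ∀ j ≥ N, n ≤ commonPrefixLen (s N) (s j) := by
  obtain ⟨-, ⟨K, hK⟩, hlen⟩ := isCoarseSeqT_iff.1 hs
  obtain ⟨N, hN⟩ := (hlen.eventually_ge_atTop (n + K)).exists_forall_of_atTop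
  refine ⟨N, fun j hj => ?_⟩
  induction j, hj using Nat.le_induction with
  | base =>
    rw [commonPrefixLen_self]
    have := hN N le_rfl
    omega
  | succ j hj ih =>
    have := min_commonPrefixLen_le (s N) (s j) (s (j + 1))
    have := length_le_commonPrefixLen_add_treeDist (s j) (s (j + 1))
    have := hK j
    have := hN j hj
    omega

theorem exists_tendstoBranch {T : Set (List ℕ)} {s : ℕ → List ℕ} (hs : IsCoarseSeqT T s) :
    ∃ f, TendstoBranch s f := by
  suffices ∀ i, ∃ a, ∀ᶠ j in atTop, (s j)[i]? = some a from
    ⟨fun i => (this i).choose, fun i => (this i).choose_spec⟩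
  intro i
  obtain ⟨N, hN⟩ := exists_le_commonPrefixLen_of_isCoarseSeqT hs (i + 1)
  obtain ⟨hlen, -⟩ := le_commonPrefixLen_iff.1 (hN N le_rfl)
  refine ⟨(s N)[i], eventually_atTop.2 ⟨N, fun j hj => ?_⟩⟩
  obtain ⟨-, htake⟩ := le_commonPrefixLen_iff.1 (hN j hj)
  rw [← List.getElem?_eq_getElem, ← List.getElem?_take_of_lt (Nat.lt_succ_self i), ← htake,
    List.getElem?_take_of_lt (Nat.lt_succ_self i)]

section Sigma

variable {T : Set (List ℕ)} {s t : ℕ → List ℕ}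

theorem IsSubseq.sigmaRelT (hs : IsCoarseSeqT T s) (ht : IsCoarseSeqT T t) (h : IsSubseq s t) :
    SigmaRelT T s t := by
  refine ⟨1, fun i => if i = 0 then s else t, rfl, rfl, fun i _ => ?_, fun i hi => ?_⟩
  · dsimp only
    split <;> assumption
  · obtain rfl : i = 0 := by omega
    exact Or.inl h

theorem IsSubseq.tendstoBranch_iff {f : ℕ → ℕ} (ht : IsCoarseSeqT T t) (h : IsSubseq s t) :
    TendstoBranch s f ↔ TendstoBranch t f := by
  obtain ⟨k, hk, rfl⟩ : ∃ k, StrictMono k ∧ s = t ∘ k := by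
    obtain ⟨k, hk, hs⟩ := h
    exact ⟨k, hk, funext hs⟩
  refine ⟨fun hs => ?_, fun ht => ht.comp_strictMono hk⟩
  obtain ⟨g, hg⟩ := exists_tendstoBranch ht
  rwa [hs.unique (hg.comp_strictMono hk)]

theorem SigmaRelT.tendstoBranch_iff {f : ℕ → ℕ} (h : SigmaRelT T s t) :
    TendstoBranch s f ↔ TendstoBranch t f := by
  obtain ⟨n, u, rfl, rfl, hu, hsub⟩ := h
  induction n with
  | zero => rfl
  | succ n ih =>
    rw [ih (fun i hi => hu i (by omega)) (fun i hi => hsub i (by omega))]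
    rcases hsub n (Nat.lt_succ_self n) with h | h
    · exact h.tendstoBranch_iff (hu (n + 1) le_rfl)
    · exact (h.tendstoBranch_iff (hu n (Nat.le_succ n))).symm

def sigmaMk (hs : IsCoarseSeqT T s) : SigmaQuotT T := Quot.mk _ ⟨s, hs⟩

theorem sigmaMk_eq_of_isSubseq (hs : IsCoarseSeqT T s) (ht : IsCoarseSeqT T t)
    (h : IsSubseq s t) : sigmaMk hs = sigmaMk ht :=
  Quot.sound (h.sigmaRelT hs ht)

theorem IsCoarseSeqT.of_treeDist_le (ht : IsCoarseSeqT T t) (hs : ∀ i, s i ∈ T) {C : ℕ}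
    (h : ∀ i, treeDist (s i) (t i) ≤ C) : IsCoarseSeqT T s := by
  obtain ⟨-, ⟨K, hK⟩, hlen⟩ := isCoarseSeqT_iff.1 ht
  refine isCoarseSeqT_iff.2 ⟨hs, ⟨C + K + C, fun i => ?_⟩, ?_⟩
  · calc treeDist (s i) (s (i + 1))
        ≤ treeDist (s i) (t i) + treeDist (t i) (t (i + 1)) + treeDist (t (i + 1)) (s (i + 1)) :=
          (treeDist_triangle _ (t (i + 1)) _).trans
            (Nat.add_le_add_right (treeDist_triangle _ _ _) _)
      _ ≤ C + K + C := by
          rw [treeDist_comm (t (i + 1))]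
          exact Nat.add_le_add (Nat.add_le_add (h i) (hK i)) (h (i + 1))
  · refine tendsto_atTop_mono (fun i => ?_) ((tendsto_sub_atTop_nat C).comp hlen)
    have := length_le_length_add_treeDist (s i) (t i)
    have := h i
    simp only [Function.comp_apply]
    omega

def interleave {α : Type*} (s t : ℕ → α) (i : ℕ) : α := if i % 2 = 0 then s (i / 2) else t (i / 2)

@[simp] theorem interleave_two_mul {α : Type*} (s t : ℕ → α) (k : ℕ) :
    interleave s t (2 * k) = s k := by
  simp [interleave]

@[simp] theorem interleave_two_mul_add_one {α : Type*} (s t : ℕ → α) (k : ℕ) :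
    interleave s t (2 * k + 1) = t k := by
  simp only [interleave]
  rw [if_neg (by omega)]
  congr 1
  omega

theorem isCoarseSeqT_interleave (hs : IsCoarseSeqT T s) (ht : IsCoarseSeqT T t) {C : ℕ}
    (h : ∀ i, treeDist (s i) (t i) ≤ C) : IsCoarseSeqT T (interleave s t) := by
  obtain ⟨hsT, ⟨K, hK⟩, hslen⟩ := isCoarseSeqT_iff.1 hs
  obtain ⟨htT, -, htlen⟩ := isCoarseSeqT_iff.1 ht
  have hcases : ∀ i, interleave s t i = s (i / 2) ∨ interleave s t i = t (i / 2) := fun i => by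
    unfold interleave; split <;> simp
  refine isCoarseSeqT_iff.2 ⟨fun i => (hcases i).elim (· ▸ hsT _) (· ▸ htT _), ⟨C + K, ?_⟩, ?_⟩
  · intro i
    obtain ⟨k, rfl | rfl⟩ := Nat.even_or_odd' i
    · simp only [interleave_two_mul, interleave_two_mul_add_one]
      exact (h k).trans (Nat.le_add_right C K)
    · rw [show 2 * k + 1 + 1 = 2 * (k + 1) by ring, interleave_two_mul,
        interleave_two_mul_add_one]
      exact (treeDist_triangle _ (s k) _).trans
        (Nat.add_le_add ((treeDist_comm _ _).trans_le (h k)) (hK k))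
  · have hhalf : Tendsto (fun i : ℕ => i / 2) atTop atTop :=
      tendsto_atTop_atTop.2 fun b => ⟨2 * b, fun i hi => by omega⟩
    refine tendsto_atTop.2 fun b => ?_
    filter_upwards [hhalf.eventually ((hslen.eventually_ge_atTop b).and
      (htlen.eventually_ge_atTop b))] with i hi
    rcases hcases i with hi' | hi' <;> rw [hi']
    exacts [hi.1, hi.2]

/-- Both sequences are subsequences of their interleaving. -/
theorem sigmaMk_eq_of_treeDist_le (hs : IsCoarseSeqT T s) (ht : IsCoarseSeqT T t) {C : ℕ}
    (h : ∀ i, treeDist (s i) (t i) ≤ C) : sigmaMk hs = sigmaMk ht := by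
  have hw := isCoarseSeqT_interleave hs ht h
  calc sigmaMk hs = sigmaMk hw :=
        sigmaMk_eq_of_isSubseq hs hw
          ⟨(2 * ·), fun a b hab => by dsimp only; omega, fun k => by simp⟩
    _ = sigmaMk ht := (sigmaMk_eq_of_isSubseq ht hw
        ⟨(2 * · + 1), fun a b hab => by dsimp only; omega, fun k => by simp⟩).symm

end Sigma

/-- `φ j` is the first time `a` reaches the level `L j`, the levels being spaced `K + 1` apart. -/
theorem exists_strictMono_comp_strictMono {a : ℕ → ℕ} {K : ℕ} (hstep : ∀ i, a (i + 1) ≤ a i + K)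
    (ha : Tendsto a atTop atTop) :
    ∃ φ : ℕ → ℕ, StrictMono φ ∧ StrictMono (a ∘ φ) ∧ ∀ j, a (φ (j + 1)) ≤ a (φ j) + 2 * K := by
  obtain ⟨L, hL0, hL⟩ : ∃ L : ℕ → ℕ, (∀ j, a 0 < L j) ∧ ∀ j, L (j + 1) = L j + K + 1 :=
    ⟨fun j => a 0 + 1 + (K + 1) * j, fun j => by dsimp only; omega, fun j => by ring⟩
  have hex : ∀ j, ∃ i, L j ≤ a i := fun j => (ha.eventually_ge_atTop (L j)).exists
  obtain ⟨φ, hφ_ge, hφ_min⟩ : ∃ φ : ℕ → ℕ, (∀ j, L j ≤ a (φ j)) ∧ ∀ j i, i < φ j → a i < L j :=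
    ⟨fun j => Nat.find (hex j), fun j => Nat.find_spec (hex j),
      fun j i hi => not_le.1 (Nat.find_min (hex j) hi)⟩
  have hφ_lt : ∀ j, a (φ j) < L j + K := by
    intro j
    obtain ⟨i, hi⟩ : ∃ i, φ j = i + 1 := Nat.exists_eq_add_one.2 <| Nat.pos_of_ne_zero fun h0 => by
      have := hφ_ge j
      have := hL0 j
      rw [h0] at *
      omega
    have := hstep i
    have := hφ_min j i (by omega)
    rw [hi]
    omega
  have haφ : StrictMono (a ∘ φ) := strictMono_nat_of_lt_succ fun j => by
    have := hφ_lt j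
    have := hφ_ge (j + 1)
    have := hL j
    simp only [Function.comp_apply]
    omega
  refine ⟨φ, strictMono_nat_of_lt_succ fun j => ?_, haφ, fun j => ?_⟩
  · refine lt_of_le_of_ne (not_lt.1 fun h => ?_) fun h => (haφ j.lt_succ_self).ne (congrArg a h)
    exact ((hφ_min j _ h).trans_le (hφ_ge j)).not_gt (haφ j.lt_succ_self)
  · have := hφ_lt (j + 1)
    have := hφ_ge j
    have := hL j
    omega

theorem isCoarseSeqT_branchPrefix_comp {T : Set (List ℕ)} {f : ℕ → ℕ}
    (hf : ∀ n, branchPrefix f n ∈ T) {a : ℕ → ℕ} {K : ℕ}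
    (hstep : ∀ i, a (i + 1) ≤ a i + K ∧ a i ≤ a (i + 1) + K) (ha : Tendsto a atTop atTop) :
    IsCoarseSeqT T fun i => branchPrefix f (a i) :=
  isCoarseSeqT_iff.2 ⟨fun i => hf _, ⟨K, fun i => by
    rw [treeDist_branchPrefix]
    have := hstep i
    omega⟩, by simpa using ha⟩

theorem isCoarseSeqT_branchPrefix {T : Set (List ℕ)} {f : ℕ → ℕ}
    (hf : ∀ n, branchPrefix f n ∈ T) : IsCoarseSeqT T (branchPrefix f) :=
  isCoarseSeqT_branchPrefix_comp hf (a := id) (K := 1)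
    (fun i => ⟨le_rfl, by simp only [id]; omega⟩) tendsto_id

theorem sigmaMk_branchPrefix_comp_eq {T : Set (List ℕ)} {f : ℕ → ℕ}
    (hf : ∀ n, branchPrefix f n ∈ T) {a : ℕ → ℕ}
    (ha : IsCoarseSeqT T fun i => branchPrefix f (a i)) :
    sigmaMk ha = sigmaMk (isCoarseSeqT_branchPrefix hf) := by
  obtain ⟨-, ⟨K, hK⟩, hlen⟩ := isCoarseSeqT_iff.1 ha
  have hstep : ∀ i, a (i + 1) ≤ a i + K := fun i => by
    have := hK i
    rw [treeDist_branchPrefix] at this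
    omega
  obtain ⟨φ, hφ, haφ, hgap⟩ := exists_strictMono_comp_strictMono hstep (by simpa using hlen)
  have hρ : IsCoarseSeqT T fun j => branchPrefix f (a (φ j)) :=
    isCoarseSeqT_branchPrefix_comp hf (K := 2 * K)
      (fun j => ⟨hgap j, (haφ j.lt_succ_self).le.trans (Nat.le_add_right _ _)⟩) haφ.tendsto_atTop
  calc sigmaMk ha = sigmaMk hρ := (sigmaMk_eq_of_isSubseq hρ ha ⟨φ, hφ, fun _ => rfl⟩).symm
    _ = _ := sigmaMk_eq_of_isSubseq hρ _ ⟨a ∘ φ, haφ, fun _ => rfl⟩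

section NearTimes

variable {s : ℕ → List ℕ} {f : ℕ → ℕ} {K : ℕ}

theorem agreeLen_eq_of_forall_far (hK : ∀ i, treeDist (s i) (s (i + 1)) ≤ K) {m n : ℕ}
    (hmn : m ≤ n) (hfar : ∀ i, m ≤ i → i < n → agreeLen f (s i) + K < (s i).length) :
    agreeLen f (s n) = agreeLen f (s m) := by
  induction n, hmn using Nat.le_induction with
  | base => rfl
  | succ n hmn ih =>
    rw [agreeLen_eq_of_add_treeDist_lt ((Nat.add_le_add_left (hK n) _).trans_lt
      (hfar n hmn n.lt_succ_self)), ih fun i h1 h2 => hfar i h1 (by omega)]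

theorem infinite_setOf_length_le_agreeLen_add (hK : ∀ i, treeDist (s i) (s (i + 1)) ≤ K)
    (hf : Tendsto (fun i => agreeLen f (s i)) atTop atTop) :
    {i | (s i).length ≤ agreeLen f (s i) + K}.Infinite := by
  refine Nat.frequently_atTop_iff_infinite.1 (frequently_atTop.2 fun m => ?_)
  by_contra! hfar
  obtain ⟨n, hgt, hn⟩ := ((hf.eventually_gt_atTop (agreeLen f (s m))).and
    (eventually_ge_atTop m)).exists
  exact hgt.ne' (agreeLen_eq_of_forall_far hK hn fun i hi _ => hfar i hi)

variable (s f K) in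
/-- The times at which `s` is within `K` of the branch `f`, in increasing order. -/
noncomputable def nearTimes : ℕ → ℕ := Nat.nth fun i => (s i).length ≤ agreeLen f (s i) + K

/-- Between two near times `s` is far from `f`, so the depth at which it leaves `f` is frozen. -/
theorem agreeLen_nearTimes_succ (hK : ∀ i, treeDist (s i) (s (i + 1)) ≤ K)
    (hinf : {i | (s i).length ≤ agreeLen f (s i) + K}.Infinite) (j : ℕ) :
    agreeLen f (s (nearTimes s f K (j + 1))) ≤ agreeLen f (s (nearTimes s f K j)) + K ∧
      agreeLen f (s (nearTimes s f K j)) ≤ agreeLen f (s (nearTimes s f K (j + 1))) + K := by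
  set g := nearTimes s f K
  have hfrozen : agreeLen f (s (g (j + 1))) = agreeLen f (s (g j + 1)) :=
    agreeLen_eq_of_forall_far hK (Nat.nth_strictMono hinf j.lt_succ_self)
      fun i hi hi' => not_le.1 fun hnear => by
        have : i ≤ g j := Nat.le_nth_of_lt_nth_succ hi' hnear
        omega
  have := agreeLen_le_agreeLen_add_treeDist f (s (g j)) (s (g j + 1))
  have := agreeLen_le_agreeLen_add_treeDist f (s (g j + 1)) (s (g j))
  rw [treeDist_comm] at this
  have := hK (g j)
  omega

end NearTimes

/-- Along the near times `s` is `K`-close to the prefixes of `f` at which it leaves `f`. -/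
theorem sigmaMk_eq_sigmaMk_branchPrefix {T : Set (List ℕ)} (hT : IsTree T) {s : ℕ → List ℕ}
    (hs : IsCoarseSeqT T s) {f : ℕ → ℕ} (hf : TendstoBranch s f) :
    sigmaMk hs = sigmaMk (isCoarseSeqT_branchPrefix (hf.branchPrefix_mem hT hs.1)) := by
  obtain ⟨-, ⟨K, hK⟩, -⟩ := isCoarseSeqT_iff.1 hs
  have hbr := hf.branchPrefix_mem hT hs.1
  have hinf := infinite_setOf_length_le_agreeLen_add hK hf.tendsto_agreeLen
  set g := nearTimes s f K
  have hg : StrictMono g := Nat.nth_strictMono hinf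
  have hπ : IsCoarseSeqT T fun j => branchPrefix f (agreeLen f (s (g j))) :=
    isCoarseSeqT_branchPrefix_comp hbr (agreeLen_nearTimes_succ hK hinf)
      (hf.tendsto_agreeLen.comp hg.tendsto_atTop)
  have hclose : ∀ j, treeDist (s (g j)) (branchPrefix f (agreeLen f (s (g j)))) ≤ K := fun j => by
    rw [treeDist_branchPrefix_agreeLen]
    have : (s (g j)).length ≤ agreeLen f (s (g j)) + K := Nat.nth_mem_of_infinite hinf j
    omega
  have hs' : IsCoarseSeqT T (s ∘ g) := hπ.of_treeDist_le (fun j => hs.1 (g j)) hclose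
  calc sigmaMk hs = sigmaMk hs' := (sigmaMk_eq_of_isSubseq hs' hs ⟨g, hg, fun _ => rfl⟩).symm
    _ = sigmaMk hπ := sigmaMk_eq_of_treeDist_le hs' hπ hclose
    _ = _ := sigmaMk_branchPrefix_comp_eq hbr hπ

noncomputable def branchLimit {T : Set (List ℕ)} {s : ℕ → List ℕ} (hs : IsCoarseSeqT T s) :
    ℕ → ℕ :=
  (exists_tendstoBranch hs).choose

theorem tendstoBranch_branchLimit {T : Set (List ℕ)} {s : ℕ → List ℕ} (hs : IsCoarseSeqT T s) :
    TendstoBranch s (branchLimit hs) :=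
  (exists_tendstoBranch hs).choose_spec

theorem sigmaQuot_equiv_branches_general (T : Set (List ℕ)) (hT : IsTree T) :
    Nonempty (SigmaQuotT T ≃ Branch T) := by
  have hbr (s : CoarseSeqT T) : ∀ n, branchPrefix (branchLimit s.2) n ∈ T :=
    (tendstoBranch_branchLimit s.2).branchPrefix_mem hT s.2.1
  refine ⟨{ toFun := Quot.lift (fun s => ⟨branchLimit s.2, hbr s⟩) fun s t hst => Subtype.ext <|
              (hst.tendstoBranch_iff.1 (tendstoBranch_branchLimit s.2)).unique
                (tendstoBranch_branchLimit t.2)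
            invFun := fun f => sigmaMk (isCoarseSeqT_branchPrefix f.2)
            left_inv := ?_
            right_inv := ?_ }⟩
  · rintro ⟨⟨s, hs⟩⟩
    exact (sigmaMk_eq_sigmaMk_branchPrefix hT hs (tendstoBranch_branchLimit hs)).symm
  · rintro ⟨f, hf⟩
    exact Subtype.ext ((tendstoBranch_branchLimit (isCoarseSeqT_branchPrefix hf)).unique
      (tendstoBranch_branchPrefix f))

/-- for a finitely branching rooted tree `T` with the tree metric,
`σ(T, root)` is equipotent to the set `[T]` of infinite branches of `T`. -/
theorem sigmaQuot_equiv_branches (T : Set (List ℕ)) (hT : IsTree T)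
    (hfb : FinitelyBranching T) :
    Nonempty (SigmaQuotT T ≃ Branch T) :=
  sigmaQuot_equiv_branches_general T hT
end
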